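/- The number of exotic planar forests (taken up to relabeling of the liana numbers) of order 1 is 2, the number of exotic planar forests of order 2 is 11, and the number of exotic planar forests of order 3 is 95. -/

import Mathlib

/-! Exotic planar forests: decorated planar forests over `{•} ∪ ℕ` in which every
numbered node is a leaf and every number decorates zero or exactly two leaves,
taken up to relabeling of the liana numbers (encoded below by canonically
labelled representatives, the numbers being relabelled by order of occurrence).
The statement counts the exotic planar forests of orders 1, 2 and 3. -/

inductive Dec : Type where
  | bullet : Dec
  | num : ℕ → Dec
  deriving DecidableEq

/-- Decorated planar trees: a decoration together with an ordered list of subtrees. -/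
inductive PTree : Type where
  | node : Dec → List PTree → PTree

/-- Decorated planar forests: ordered lists of decorated planar trees. -/
abbrev Forest : Type := List PTree

namespace PTree

/-- The list of decorations of a tree, in preorder. -/
def decsT : PTree → List Dec
  | .node d ts => d :: (ts.attach.map fun t => decsT t.1).flatten
decreasing_by
  have := List.sizeOf_lt_of_mem t.2
  simp only [PTree.node.sizeOf_spec]
  omega

/-- Every numbered node of the tree is a leaf. -/
def numLeavesT : PTree → Bool
  | .node (.num _) ts => ts.isEmpty
  | .node .bullet ts => ts.attach.all fun t => numLeavesT t.1
decreasing_by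
  have := List.sizeOf_lt_of_mem t.2
  simp only [PTree.node.sizeOf_spec]
  omega

/-- Relabel the numbered nodes of a tree using `f`. -/
def relabelT (f : ℕ → ℕ) : PTree → PTree
  | .node .bullet ts => .node .bullet (ts.attach.map fun t => relabelT f t.1)
  | .node (.num n) ts => .node (.num (f n)) (ts.attach.map fun t => relabelT f t.1)
decreasing_by
  all_goals
    have := List.sizeOf_lt_of_mem t.2
    simp only [PTree.node.sizeOf_spec]
    omega

end PTree

/-- The list of decorations of a forest, in preorder. -/
def decsF (π : Forest) : List Dec := (π.map PTree.decsT).flatten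

/-- The list of numbers decorating the nodes of a forest. -/
def numsF (π : Forest) : List ℕ :=
  (decsF π).filterMap fun d => match d with | .num n => some n | .bullet => none

/-- Every numbered node of the forest is a leaf. -/
def allNumLeaves (π : Forest) : Bool := π.all PTree.numLeavesT

/-- A forest is exotic if every numbered node is a leaf and every number decorates
either zero or exactly two leaves. -/
def IsExotic (π : Forest) : Prop :=
  allNumLeaves π = true ∧ ∀ n : ℕ, (numsF π).count n = 0 ∨ (numsF π).count n = 2

/-- Relabel the numbered nodes of a forest using `f`. -/
def relabelF (f : ℕ → ℕ) (π : Forest) : Forest := π.map (PTree.relabelT f)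

/-- Canonical relabeling of the numbers of a forest, by order of occurrence. -/
def normalizeF (π : Forest) : Forest :=
  relabelF (fun n => (numsF π).dedup.idxOf n) π

/-- The order of an exotic forest: the number of bullet nodes plus half the number
of numbered leaves. -/
def orderF (π : Forest) : ℕ := (decsF π).count Dec.bullet + (numsF π).length / 2

/-- Exotic planar forests, up to relabeling of the lianas (encoded by
canonically labelled representatives). -/
def ExoticForest : Type := {π : Forest // IsExotic π ∧ normalizeF π = π}


/-! Counting is a finite computation. Give a bullet weight 2 and a numbered leaf weight 1: an
exotic forest of order `n` then has weight `2n`, and in canonical labelling its numbers are the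
indices of its `≤ n` lianas, hence below `n`. Every forest of weight `w` whose numbered nodes
are leaves is empty, or a numbered leaf followed by a forest of weight `w - 1`, or a bullet
over a forest of weight `k` followed by one of weight `w - 2 - k`; this recursion lists a finite
superset of the exotic forests of order `n`, which the kernel filters and counts. -/

mutual
def PTree.decEq : (t s : PTree) → Decidable (t = s)
  | .node d ts, .node e ss =>
    if hd : d = e then
      match PTree.decEqList ts ss with
      | isTrue hts => isTrue (hd ▸ hts ▸ rfl)
      | isFalse hts => isFalse fun h => hts (PTree.node.inj h).2
    else isFalse fun h => hd (PTree.node.inj h).1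

def PTree.decEqList : (ts ss : List PTree) → Decidable (ts = ss)
  | [], [] => isTrue rfl
  | [], _ :: _ => isFalse nofun
  | _ :: _, [] => isFalse nofun
  | t :: ts, s :: ss =>
    match PTree.decEq t s, PTree.decEqList ts ss with
    | isTrue ht, isTrue hts => isTrue (ht ▸ hts ▸ rfl)
    | isFalse ht, _ => isFalse fun h => ht (List.cons.inj h).1
    | _, isFalse hts => isFalse fun h => hts (List.cons.inj h).2
end

instance : DecidableEq PTree := PTree.decEq

def Dec.num? : Dec → Option ℕ
  | .num n => some n
  | .bullet => none

def Dec.map (f : ℕ → ℕ) : Dec → Dec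
  | .bullet => .bullet
  | .num n => .num (f n)

theorem Dec.num?_comp_map (f : ℕ → ℕ) :
    Dec.num? ∘ Dec.map f = fun d => (Dec.num? d).map f := by
  funext d
  cases d <;> rfl

/- `PTree.decsT`, `PTree.numLeavesT` and `PTree.relabelT` recurse through `List.attach` by
well-founded recursion, which the kernel does not evaluate; `decide` runs on these structurally
recursive copies instead. -/
mutual
def PTree.decs : PTree → List Dec
  | .node d ts => d :: forestDecs ts

def forestDecs : Forest → List Dec
  | [] => []
  | t :: ts => t.decs ++ forestDecs ts
end

mutual
def PTree.numLeaves : PTree → Bool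
  | .node (.num _) ts => ts.isEmpty
  | .node .bullet ts => forestNumLeaves ts

def forestNumLeaves : Forest → Bool
  | [] => true
  | t :: ts => t.numLeaves && forestNumLeaves ts
end

mutual
def PTree.relabel (f : ℕ → ℕ) : PTree → PTree
  | .node d ts => .node (d.map f) (forestRelabel f ts)

def forestRelabel (f : ℕ → ℕ) : Forest → Forest
  | [] => []
  | t :: ts => t.relabel f :: forestRelabel f ts
end

def forestNums (π : Forest) : List ℕ := (forestDecs π).filterMap Dec.num?

mutual
theorem PTree.decsT_eq_decs : ∀ t : PTree, t.decsT = t.decs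
  | .node d ts => by
    rw [PTree.decsT, List.attach_map_val (f := PTree.decsT), flatten_map_decsT_eq_forestDecs ts,
      PTree.decs]

theorem flatten_map_decsT_eq_forestDecs :
    ∀ π : Forest, (π.map PTree.decsT).flatten = forestDecs π
  | [] => rfl
  | t :: ts => by
    rw [List.map_cons, List.flatten_cons, PTree.decsT_eq_decs t,
      flatten_map_decsT_eq_forestDecs ts, forestDecs]
end

theorem decsF_eq_forestDecs (π : Forest) : decsF π = forestDecs π :=
  flatten_map_decsT_eq_forestDecs π

mutual
theorem PTree.numLeavesT_eq_numLeaves : ∀ t : PTree, t.numLeavesT = t.numLeaves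
  | .node (.num _) ts => by rw [PTree.numLeavesT, PTree.numLeaves]
  | .node .bullet ts => by
    rw [PTree.numLeavesT, List.all_subtype fun _ _ => rfl, List.unattach_attach,
      all_numLeavesT_eq_forestNumLeaves ts, PTree.numLeaves]

theorem all_numLeavesT_eq_forestNumLeaves :
    ∀ π : Forest, π.all PTree.numLeavesT = forestNumLeaves π
  | [] => rfl
  | t :: ts => by
    rw [List.all_cons, PTree.numLeavesT_eq_numLeaves t, all_numLeavesT_eq_forestNumLeaves ts,
      forestNumLeaves]
end

mutual
theorem PTree.relabelT_eq_relabel (f : ℕ → ℕ) : ∀ t : PTree, t.relabelT f = t.relabel f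
  | .node d ts => by
    cases d <;>
      rw [PTree.relabelT, List.attach_map_val (f := PTree.relabelT f),
        map_relabelT_eq_forestRelabel f ts, PTree.relabel] <;> rfl

theorem map_relabelT_eq_forestRelabel (f : ℕ → ℕ) :
    ∀ π : Forest, π.map (PTree.relabelT f) = forestRelabel f π
  | [] => rfl
  | t :: ts => by
    rw [List.map_cons, PTree.relabelT_eq_relabel f t, map_relabelT_eq_forestRelabel f ts,
      forestRelabel]
end

theorem numsF_eq_forestNums (π : Forest) : numsF π = forestNums π := by
  rw [numsF, decsF_eq_forestDecs]
  rfl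

mutual
theorem PTree.decs_relabel (f : ℕ → ℕ) :
    ∀ t : PTree, (t.relabel f).decs = t.decs.map (Dec.map f)
  | .node d ts => by
    rw [PTree.relabel, PTree.decs, PTree.decs, forestDecs_relabel f ts, List.map_cons]

theorem forestDecs_relabel (f : ℕ → ℕ) :
    ∀ π : Forest, forestDecs (forestRelabel f π) = (forestDecs π).map (Dec.map f)
  | [] => rfl
  | t :: ts => by
    rw [forestRelabel, forestDecs, forestDecs, PTree.decs_relabel f t, forestDecs_relabel f ts,
      List.map_append]
end

theorem forestNums_relabel (f : ℕ → ℕ) (π : Forest) :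
    forestNums (forestRelabel f π) = (forestNums π).map f := by
  rw [forestNums, forestNums, forestDecs_relabel, List.filterMap_map, Dec.num?_comp_map,
    List.map_filterMap]

theorem forestDecs_node_cons (d : Dec) (ts π : Forest) :
    forestDecs (.node d ts :: π) = d :: (forestDecs ts ++ forestDecs π) := by
  rw [forestDecs, PTree.decs, List.cons_append]

def Dec.weight : Dec → ℕ
  | .num _ => 1
  | .bullet => 2

theorem sum_map_weight (l : List Dec) :
    (l.map Dec.weight).sum = 2 * l.count .bullet + (l.filterMap Dec.num?).length := by
  induction l with
  | nil => rfl
  | cons d l ih =>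
    cases d with
    | num i => simp [Dec.weight, Dec.num?, ih]; omega
    | bullet => simp [Dec.weight, Dec.num?, List.filterMap_cons, ih]; omega

def forestWeight (π : Forest) : ℕ := ((forestDecs π).map Dec.weight).sum

theorem forestWeight_nil : forestWeight [] = 0 := rfl

theorem forestWeight_node_cons (d : Dec) (ts π : Forest) :
    forestWeight (.node d ts :: π) = d.weight + forestWeight ts + forestWeight π := by
  simp only [forestWeight, forestDecs_node_cons, List.map_cons, List.map_append, List.sum_cons,
    List.sum_append, add_assoc]

def enumForests (N : ℕ) : ℕ → ℕ → List Forest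
  | 0, w => if w = 0 then [[]] else []
  | fuel + 1, w =>
    if w = 0 then [[]] else
      ((List.range N).flatMap fun i =>
        (enumForests N fuel (w - 1)).map (.node (.num i) [] :: ·)) ++
      ((List.range (w - 1)).flatMap fun k =>
        (enumForests N fuel k).flatMap fun ts =>
          (enumForests N fuel (w - 2 - k)).map (.node .bullet ts :: ·))

theorem leaf_cons_mem_enumForests {N fuel w i : ℕ} {π : Forest} (hi : i < N)
    (hπ : π ∈ enumForests N fuel w) :
    .node (.num i) [] :: π ∈ enumForests N (fuel + 1) (w + 1) := by
  rw [enumForests, if_neg w.succ_ne_zero]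
  exact List.mem_append_left _ (List.mem_flatMap.2 ⟨i, List.mem_range.2 hi,
    List.mem_map.2 ⟨π, hπ, rfl⟩⟩)

theorem bullet_cons_mem_enumForests {N fuel k w : ℕ} {ts π : Forest}
    (hts : ts ∈ enumForests N fuel k) (hπ : π ∈ enumForests N fuel w) :
    .node .bullet ts :: π ∈ enumForests N (fuel + 1) (k + w + 2) := by
  rw [enumForests, if_neg (by omega)]
  refine List.mem_append_right _ (List.mem_flatMap.2 ⟨k, List.mem_range.2 (by omega),
    List.mem_flatMap.2 ⟨ts, hts, List.mem_map.2 ⟨π, ?_, rfl⟩⟩⟩)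
  rwa [show k + w + 2 - 2 - k = w by omega]

theorem mem_enumForests {N : ℕ} :
    ∀ {fuel : ℕ} {π : Forest}, forestWeight π ≤ fuel → forestNumLeaves π = true →
      (∀ i, .num i ∈ forestDecs π → i < N) → π ∈ enumForests N fuel (forestWeight π)
  | fuel, [], _, _, _ => by cases fuel <;> simp [enumForests, forestWeight_nil]
  | 0, .node d ts :: π, hw, _, _ => by
    rw [forestWeight_node_cons] at hw
    cases d <;> simp [Dec.weight] at hw
  | fuel + 1, .node d ts :: π, hw, hleaves, hN => by
    have hNts : ∀ i, .num i ∈ forestDecs ts → i < N := fun i hi =>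
      hN i (by rw [forestDecs_node_cons]; simp [hi])
    have hNπ : ∀ i, .num i ∈ forestDecs π → i < N := fun i hi =>
      hN i (by rw [forestDecs_node_cons]; simp [hi])
    rw [forestWeight_node_cons] at hw ⊢
    cases d with
    | num i =>
      simp only [forestNumLeaves, PTree.numLeaves, Bool.and_eq_true, List.isEmpty_iff] at hleaves
      obtain ⟨rfl, hleaves⟩ := hleaves
      simp only [Dec.weight, forestWeight_nil] at hw ⊢
      have hi : i < N := hN i (by rw [forestDecs_node_cons]; exact List.mem_cons_self)
      rw [add_zero, add_comm 1]
      exact leaf_cons_mem_enumForests hi (mem_enumForests (fuel := fuel) (by omega) hleaves hNπ)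
    | bullet =>
      simp only [forestNumLeaves, PTree.numLeaves, Bool.and_eq_true] at hleaves
      simp only [Dec.weight] at hw ⊢
      rw [add_assoc, add_comm 2]
      exact bullet_cons_mem_enumForests (mem_enumForests (fuel := fuel) (by omega) hleaves.1 hNts)
        (mem_enumForests (fuel := fuel) (by omega) hleaves.2 hNπ)

theorem List.forall_count_eq_zero_or_eq_iff {α : Type*} [DecidableEq α] (l : List α) (k : ℕ) :
    (∀ a, l.count a = 0 ∨ l.count a = k) ↔ ∀ a ∈ l, l.count a = k := by
  refine ⟨fun h a ha => (h a).resolve_left (List.count_pos_iff.2 ha).ne', fun h a => ?_⟩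
  by_cases ha : a ∈ l
  · exact Or.inr (h a ha)
  · exact Or.inl (List.count_eq_zero.2 ha)

theorem List.length_eq_mul_length_dedup {α : Type*} [DecidableEq α] {l : List α} {k : ℕ}
    (h : ∀ a ∈ l, l.count a = k) : l.length = k * l.dedup.length := by
  rw [← List.sum_toFinset_count_eq_length, Finset.sum_congr rfl fun a ha => h a
    (List.mem_toFinset.1 ha), Finset.sum_const, smul_eq_mul, List.card_toFinset, mul_comm]

def IsCanonicalExoticOfOrder (n : ℕ) (π : Forest) : Prop :=
  forestNumLeaves π = true ∧ (∀ x ∈ forestNums π, (forestNums π).count x = 2) ∧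
    forestRelabel (fun x => (forestNums π).dedup.idxOf x) π = π ∧
    (forestDecs π).count .bullet + (forestNums π).length / 2 = n

instance (n : ℕ) : DecidablePred (IsCanonicalExoticOfOrder n) :=
  fun _ => inferInstanceAs (Decidable (_ ∧ _ ∧ _ ∧ _))

theorem isCanonicalExoticOfOrder_iff (n : ℕ) (π : Forest) :
    IsCanonicalExoticOfOrder n π ↔ (IsExotic π ∧ normalizeF π = π) ∧ orderF π = n := by
  rw [IsExotic, normalizeF, orderF, allNumLeaves, all_numLeavesT_eq_forestNumLeaves, relabelF,
    map_relabelT_eq_forestRelabel, numsF_eq_forestNums, decsF_eq_forestDecs,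
    List.forall_count_eq_zero_or_eq_iff, IsCanonicalExoticOfOrder]
  simp only [and_assoc]

theorem IsCanonicalExoticOfOrder.mem_enumForests {n : ℕ} {π : Forest}
    (h : IsCanonicalExoticOfOrder n π) : π ∈ enumForests n (2 * n) (2 * n) := by
  obtain ⟨hleaves, hcount, hcanonical, horder⟩ := h
  have hlength := List.length_eq_mul_length_dedup hcount
  have hweight : forestWeight π = 2 * n := by
    rw [forestWeight, sum_map_weight]
    change 2 * (forestDecs π).count .bullet + (forestNums π).length = 2 * n
    omega
  have hlabels : ∀ i, .num i ∈ forestDecs π → i < n := by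
    intro i hi
    have hi : i ∈ forestNums π := List.mem_filterMap.2 ⟨_, hi, rfl⟩
    rw [← hcanonical, forestNums_relabel] at hi
    obtain ⟨y, hy, rfl⟩ := List.mem_map.1 hi
    have := List.idxOf_lt_length_iff.2 (List.mem_dedup.2 hy)
    omega
  exact hweight ▸ _root_.mem_enumForests (by omega) hleaves hlabels

def canonicalExoticForests (n : ℕ) : Finset Forest :=
  ((enumForests n (2 * n) (2 * n)).filter (IsCanonicalExoticOfOrder n ·)).toFinset

theorem mem_canonicalExoticForests {n : ℕ} {π : Forest} :
    π ∈ canonicalExoticForests n ↔ IsCanonicalExoticOfOrder n π := by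
  rw [canonicalExoticForests, List.mem_toFinset, List.mem_filter, decide_eq_true_iff]
  exact ⟨And.right, fun h => ⟨h.mem_enumForests, h⟩⟩

theorem card_exoticForest_orderF_eq (n : ℕ) :
    Nat.card {π : ExoticForest // orderF π.1 = n} = (canonicalExoticForests n).card := by
  refine (Nat.card_congr (Equiv.subtypeSubtypeEquivSubtypeInter
    (fun π => IsExotic π ∧ normalizeF π = π) (fun π => orderF π = n))).trans ?_
  exact Nat.subtype_card _ fun π =>
    mem_canonicalExoticForests.trans (isCanonicalExoticOfOrder_iff n π)

/-- There are 2, 11 and 95 exotic planar forests of order 1, 2 and 3 respectively. -/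
theorem stmt12 :
    Nat.card {π : ExoticForest // orderF π.1 = 1} = 2 ∧
    Nat.card {π : ExoticForest // orderF π.1 = 2} = 11 ∧
    Nat.card {π : ExoticForest // orderF π.1 = 3} = 95 := by
  simp only [card_exoticForest_orderF_eq]
  set_option maxRecDepth 10000 in decide
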